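/- arXiv:math/0602489 — 2 statements merged into one kernel-verified Lean document; each statement's English description precedes it below -/
import Mathlib

section
/- Let (A^•, d) be a cochain complex of real vector spaces with a right action of a group G by degree-preserving linear maps commuting with d. Let ω ∈ A^m be G-invariant and exact, let 1 ≤ p ≤ m−1, and assume the complex (A^•, d) is exact in degrees m−p, …, m−1 (every closed element of A^q is exact for q = m−p, …, m−1). Then there exist cochains φ_i ∈ C^i(G, A^{m−i−1}) for i = 0, …, p such that ω = −d φ_0 and δ'φ_{i−1} + δ''φ_i = 0 for i = 1, …, p. Consequently ω + δ(φ_0 + ⋯ + φ_p) = δ'φ_p, and every value δ'φ_p(g_1,…,g_{p+1}) ∈ A^{m−p−1} is closed: d(δ'φ_p(g_1,…,g_{p+1})) = 0 for all g_1,…,g_{p+1} ∈ G. -/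
open scoped BigOperators

/-- Merge the `i`-th and `(i+1)`-st entries of a tuple of group elements by multiplication:
this produces the argument tuple `(g₁, …, g_i g_{i+1}, …, g_{p+1})` (0-indexed). -/
def mulIns {G : Type*} [Mul G] {p : ℕ} (g : Fin (p + 1) → G) (i : Fin p) : Fin p → G :=
  fun j =>
    if (j : ℕ) < (i : ℕ) then g j.castSucc
    else if (j : ℕ) = (i : ℕ) then g j.castSucc * g j.succ
    else g j.succ

/-- `δ'` : the differential of the standard complex of nonhomogeneous cochains of a group
`G` with values in a right `G`-module `A` (the right action being `act`):
`(Df)(g₁,…,g_{p+1}) = f(g₂,…,g_{p+1}) + ∑ (-1)^i f(g₁,…,g_i g_{i+1},…,g_{p+1})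
  + (-1)^{p+1} f(g₁,…,g_p)·g_{p+1}`. -/
def gd {G : Type*} [Mul G] {A : Type*} [AddCommGroup A] [Module ℝ A]
    (act : G → A →ₗ[ℝ] A) {p : ℕ} (f : (Fin p → G) → A) :
    (Fin (p + 1) → G) → A :=
  fun g =>
    f (Fin.tail g)
      + ∑ i : Fin p, ((-1 : ℝ) ^ ((i : ℕ) + 1)) • f (mulIns g i)
      + ((-1 : ℝ) ^ (p + 1)) • act (g (Fin.last p)) (f (Fin.init g))

/-- `δ''` : the second differential on `C^p(G, A^q)`,
`(δ''c)(g₁,…,g_p) = (−1)^p d (c (g₁,…,g_p))`. -/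
def gdd {G : Type*} {A : ℤ → Type*} [∀ q, AddCommGroup (A q)] [∀ q, Module ℝ (A q)]
    (d : ∀ q, A q →ₗ[ℝ] A (q + 1)) {p : ℕ} {q : ℤ} (c : (Fin p → G) → A q) :
    (Fin p → G) → A (q + 1) :=
  fun g => ((-1 : ℝ) ^ p) • d q (c g)

/-- Transport an element of a graded family along an equality of degrees. -/
def tr {A : ℤ → Type*} {q q' : ℤ} (h : q = q') (a : A q) : A q' := h ▸ a

/-!
The cochains are built one degree at a time. If the values of `δ'φᵢ` are closed and lie in a
degree where the complex is exact, each of them is `d` of something, and after a sign this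
gives `φᵢ₊₁` with `δ'φᵢ + δ''φᵢ₊₁ = 0`. Since `d` commutes with `δ'` and `δ'δ' = 0`, applying
`d` to `δ'φᵢ₊₁` gives `± δ'δ'φᵢ = 0`, so the induction continues. It starts from `φ₀ = -η`
for a primitive `η` of `ω`: `δ'φ₀(g) = η·g - η` is closed because `ω` is invariant.

For `δ'δ' = 0`, a cochain `f` is turned into the homogeneous cochain
`F(x₀, …, xₚ) = f(x₀⁻¹x₁, …, xₚ₋₁⁻¹xₚ)·xₚ⁻¹`, under which `δ'` becomes the alternating sum of
the face maps.
-/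

theorem Fin.contractNth_last {α : Type*} {n : ℕ} (op : α → α → α) (g : Fin (n + 1) → α) :
    (Fin.last n).contractNth op g = Fin.init g :=
  funext fun k => Fin.contractNth_apply_of_lt _ _ _ _ k.isLt

section AlternatingFaceSum

variable {α R M : Type*} [Ring R] [AddCommGroup M] [Module R M] {n : ℕ}

def altFaceSum (F : (Fin (n + 1) → α) → M) (x : Fin (n + 2) → α) : M :=
  ∑ j : Fin (n + 2), (-1 : R) ^ (j : ℕ) • F (j.removeNth x)

theorem altFaceSum_altFaceSum (F : (Fin (n + 1) → α) → M) (x : Fin (n + 3) → α) :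
    altFaceSum (R := R) (altFaceSum (R := R) F) x = 0 := by
  simp only [altFaceSum, Finset.smul_sum, smul_smul, ← pow_add]
  rw [← Finset.sum_product']
  refine Finset.sum_ninvolution (fun ji => (ji.1.succAbove ji.2, ji.2.predAbove ji.1))
    (fun ⟨j, i⟩ => ?_) (fun ⟨j, i⟩ _ => by simp [Fin.succAbove_ne])
    (fun _ => Finset.mem_univ _) (fun ⟨j, i⟩ => by
      simp [Fin.succAbove_succAbove_predAbove, Fin.predAbove_predAbove_succAbove])
  rw [← Fin.removeNth_removeNth_eq_swap, Fin.neg_one_pow_succAbove_add_predAbove, neg_smul,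
    add_neg_cancel]

end AlternatingFaceSum

section Homogeneous

variable {G : Type*} [Group G] {n : ℕ}

def consecQuot (x : Fin (n + 1) → G) : Fin n → G := fun i => (x i.castSucc)⁻¹ * x i.succ

theorem eq_mul_partialProd_consecQuot (x : Fin (n + 1) → G) (i : Fin (n + 1)) :
    x i = x 0 * Fin.partialProd (consecQuot x) i := by
  induction i using Fin.induction with
  | zero => rw [Fin.partialProd_zero, mul_one]
  | succ i ih => rw [Fin.partialProd_succ, ← mul_assoc, ← ih, consecQuot, mul_inv_cancel_left]

theorem consecQuot_removeNth_zero (x : Fin (n + 2) → G) :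
    consecQuot (Fin.removeNth 0 x) = Fin.tail (consecQuot x) := by
  funext i
  simp only [consecQuot, Fin.removeNth_zero, Fin.tail, Fin.succ_castSucc]

theorem consecQuot_removeNth_succ (x : Fin (n + 2) → G) (j : Fin (n + 1)) :
    consecQuot (j.succ.removeNth x) = j.contractNth (· * ·) (consecQuot x) := by
  funext k
  rw [← Fin.inv_partialProd_mul_eq_contractNth, consecQuot, Fin.removeNth, Fin.removeNth,
    ← Fin.succ_succAbove_succ, eq_mul_partialProd_consecQuot x (j.succ.succAbove _),
    eq_mul_partialProd_consecQuot x (j.succ.succAbove _), mul_inv_rev, mul_assoc,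
    inv_mul_cancel_left]

theorem mulIns_eq_contractNth (g : Fin (n + 1) → G) (i : Fin n) :
    mulIns g i = i.castSucc.contractNth (· * ·) g :=
  rfl

variable {A : Type*} [AddCommGroup A] [Module ℝ A]

def homogenize (act : G → A →ₗ[ℝ] A) (f : (Fin n → G) → A) (x : Fin (n + 1) → G) : A :=
  act (x (Fin.last n))⁻¹ (f (consecQuot x))

theorem homogenize_gd (act : G → A →ₗ[ℝ] A) (hmul : ∀ g h a, act (g * h) a = act h (act g a))
    (f : (Fin n → G) → A) :
    homogenize act (gd act f) = altFaceSum (R := ℝ) (homogenize act f) := by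
  funext x
  set c := consecQuot x
  set a := act (x (Fin.last (n + 1)))⁻¹
  have hzero : homogenize act f (Fin.removeNth 0 x) = a (f (Fin.tail c)) := by
    rw [homogenize, consecQuot_removeNth_zero, Fin.removeNth_zero, Fin.tail, Fin.succ_last]
  have hmid (i : Fin n) :
      homogenize act f (i.castSucc.succ.removeNth x) = a (f (mulIns c i)) := by
    rw [homogenize, consecQuot_removeNth_succ, Fin.removeNth,
      Fin.succAbove_of_le_castSucc _ _ (Fin.le_def.2 (by simp)), Fin.succ_last,
      mulIns_eq_contractNth]
  have hlast : homogenize act f ((Fin.last n).succ.removeNth x) =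
      a (act (c (Fin.last n)) (f (Fin.init c))) := by
    rw [homogenize, consecQuot_removeNth_succ, Fin.contractNth_last, ← hmul, Fin.succ_last,
      Fin.removeNth_last, Fin.init]
    simp [c, consecQuot]
  rw [homogenize, altFaceSum, Fin.sum_univ_succ, Fin.sum_univ_castSucc, gd, hzero, hlast]
  simp only [hmid, map_add, map_sum, map_smul, Fin.val_zero, pow_zero, one_smul, Fin.val_succ,
    Fin.val_castSucc, Fin.val_last, add_assoc]
  rfl

end Homogeneous

section Coboundary

variable {G : Type*} {A B : Type*} [AddCommGroup A] [Module ℝ A] [AddCommGroup B] [Module ℝ B]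
  {n : ℕ}

theorem gd_gd [Group G] (act : G → A →ₗ[ℝ] A) (hone : act 1 = LinearMap.id)
    (hmul : ∀ g h a, act (g * h) a = act h (act g a)) (f : (Fin n → G) → A) :
    gd act (gd act f) = 0 := by
  funext g
  have hquot : consecQuot (Fin.partialProd g) = g := funext (Fin.partialProd_right_inv g)
  have hzero := congrFun (homogenize_gd act hmul (gd act f)) (Fin.partialProd g)
  rw [homogenize_gd act hmul f, altFaceSum_altFaceSum, homogenize, hquot] at hzero
  set h := Fin.partialProd g (Fin.last (n + 2))
  calc gd act (gd act f) g = act (h⁻¹ * h) (gd act (gd act f) g) := by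
        rw [inv_mul_cancel, hone, LinearMap.id_apply]
    _ = 0 := by rw [hmul, hzero, map_zero]

theorem gd_smul [Mul G] (act : G → A →ₗ[ℝ] A) (r : ℝ) (f : (Fin n → G) → A) :
    gd act (r • f) = r • gd act f := by
  funext g
  simp only [gd, Pi.smul_apply, map_smul, smul_add, Finset.smul_sum, smul_comm r]

theorem gd_comp_linearMap [Mul G] (actA : G → A →ₗ[ℝ] A) (actB : G → B →ₗ[ℝ] B)
    (L : A →ₗ[ℝ] B) (hL : ∀ g a, L (actA g a) = actB g (L a)) (f : (Fin n → G) → A) :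
    gd actB (L ∘ f) = L ∘ gd actA f := by
  funext g
  simp only [gd, Function.comp_apply, map_add, map_smul, map_sum, hL]

end Coboundary

theorem exists_chain_of_extend {C : ℕ → Type*} [∀ i, Nonempty (C i)] (P : ∀ i, C i → Prop)
    (R : ∀ i, C i → C (i + 1) → Prop) (p : ℕ)
    (extend : ∀ i < p, ∀ x, P i x → ∃ y, R i x y ∧ P (i + 1) y)
    (x₀ : C 0) (hx₀ : P 0 x₀) :
    ∃ φ : ∀ i, C i, φ 0 = x₀ ∧ (∀ i < p, R i (φ i) (φ (i + 1))) ∧ P p (φ p) := by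
  induction p with
  | zero =>
    exact ⟨Function.update (fun _ => Classical.arbitrary _) 0 x₀, by simp, by simp, by simpa⟩
  | succ p ih =>
    obtain ⟨φ, hφ₀, hlink, hgood⟩ := ih fun i hi => extend i (by omega)
    obtain ⟨y, hy, hgood'⟩ := extend p p.lt_succ_self (φ p) hgood
    refine ⟨Function.update φ (p + 1) y, by simpa, fun i hi => ?_, by simpa⟩
    rcases Nat.lt_succ_iff_lt_or_eq.1 hi with hi | rfl
    · rw [Function.update_of_ne (by omega), Function.update_of_ne (by omega)]
      exact hlink i hi
    · rwa [Function.update_of_ne (by omega), Function.update_self]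

section Graded

variable {G : Type*} [Group G] {A : ℤ → Type*} [∀ q, AddCommGroup (A q)] [∀ q, Module ℝ (A q)]
  (d : ∀ q, A q →ₗ[ℝ] A (q + 1)) (act : ∀ q, G → A q →ₗ[ℝ] A q) {q q' : ℤ}

theorem exists_tr_d_eq_of_exists_sub_one {a : A q} {h₁ : q - 1 + 1 = q}
    (ha : ∃ b : A (q - 1), tr h₁ (d (q - 1) b) = a) (h : q' + 1 = q) :
    ∃ b : A q', tr h (d q' b) = a := by
  obtain rfl : q - 1 = q' := by omega
  exact ha

theorem exists_cochain_zero_of_exact_invariant (h : q' + 1 = q)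
    (hcomm : ∀ g a, d q' (act q' g a) = act (q' + 1) g (d q' a))
    {ω : A q} (hω : ∀ g, act q g ω = ω) (hexact : ∃ η : A q', tr h (d q' η) = ω) :
    ∃ φ₀ : (Fin 0 → G) → A q',
      ω = -tr h (d q' (φ₀ ![])) ∧ ∀ gs, d q' (gd (act q') φ₀ gs) = 0 := by
  subst h
  obtain ⟨η, rfl⟩ := hexact
  refine ⟨fun _ => -η, by simp [tr], fun gs => ?_⟩
  simp only [tr] at hω
  simp [gd, hcomm, hω]

theorem exists_gd_add_gdd_eq_zero (h : q' + 1 = q) {i : ℕ} (f : (Fin i → G) → A q)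
    (hexact : ∀ a : A q, d q a = 0 → ∃ b : A q', tr h (d q' b) = a)
    (hclosed : ∀ gs, d q (gd (act q) f gs) = 0) :
    ∃ f' : (Fin (i + 1) → G) → A q', gd (act q) f + (fun gs => tr h (gdd d f' gs)) = 0 := by
  subst h
  choose b hb using fun gs => hexact _ (hclosed gs)
  refine ⟨(-1 : ℝ) ^ i • b, funext fun gs => ?_⟩
  have hsign : (-1 : ℝ) ^ (i + 1) * (-1) ^ i = -1 := by
    rw [← pow_add, Odd.neg_one_pow ⟨i, by ring⟩]
  simp only [tr] at hb
  simp [tr, gdd, hb, smul_smul, hsign]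

theorem d_gd_eq_zero_of_gd_add_gdd_eq_zero (h : q' + 1 = q) (hone : act q 1 = LinearMap.id)
    (hmul : ∀ g g' a, act q (g * g') a = act q g' (act q g a))
    (hcomm : ∀ g a, d q' (act q' g a) = act (q' + 1) g (d q' a)) {i : ℕ}
    (f : (Fin i → G) → A q) (f' : (Fin (i + 1) → G) → A q')
    (hlink : gd (act q) f + (fun gs => tr h (gdd d f' gs)) = 0) (gs : Fin (i + 2) → G) :
    d q' (gd (act q') f' gs) = 0 := by
  subst h
  have hd : d q' ∘ f' = (-(-1 : ℝ) ^ (i + 1)) • gd (act (q' + 1)) f := by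
    funext t
    have ht := eq_neg_of_add_eq_zero_right (congrFun hlink t)
    simp only [tr, gdd] at ht
    rw [Function.comp_apply, Pi.smul_apply, neg_smul, ← smul_neg, ← ht, smul_smul, ← pow_add,
      Even.neg_one_pow ⟨i + 1, rfl⟩, one_smul]
  change (d q' ∘ gd (act q') f') gs = 0
  rw [← gd_comp_linearMap (act q') (act (q' + 1)) (d q') hcomm f', hd, gd_smul,
    gd_gd _ hone hmul, smul_zero, Pi.zero_apply]

end Graded

/-- Let `(A^•, d)` be a cochain complex of real vector spaces with a right
`G`-action by degree-preserving linear maps commuting with `d`, let `ω ∈ A^m` be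
`G`-invariant and exact, let `1 ≤ p ≤ m−1`, and assume the complex is exact in degrees
`m−p, …, m−1`.  Then there are cochains `φᵢ ∈ C^i(G, A^{m−i−1})`, `i = 0, …, p`, with
`ω = −dφ₀` and `δ'φ_{i−1} + δ''φ_i = 0` for `i = 1, …, p` (so
`ω + δ(φ₀ + ⋯ + φ_p) = δ'φ_p`), and every value of `δ'φ_p` is closed. -/
theorem statement1 {G : Type*} [Group G] {A : ℤ → Type*}
    [∀ q, AddCommGroup (A q)] [∀ q, Module ℝ (A q)]
    (d : ∀ q, A q →ₗ[ℝ] A (q + 1))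
    (act : ∀ q, G → A q →ₗ[ℝ] A q)
    (hact_one : ∀ q : ℤ, act q 1 = LinearMap.id)
    (hact_mul : ∀ (q : ℤ) (g h : G) (a : A q), act q (g * h) a = act q h (act q g a))
    (hcomm : ∀ (q : ℤ) (g : G) (a : A q), d q (act q g a) = act (q + 1) g (d q a))
    (m : ℤ) (p : ℕ)
    (ω : A m)
    (hωinv : ∀ g : G, act m g ω = ω)
    (hωexact : ∃ η : A (m - 1), tr (by omega) (d (m - 1) η) = ω)
    (hexact : ∀ q : ℤ, m - p ≤ q → q ≤ m - 1 → ∀ a : A q, d q a = 0 →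
        ∃ b : A (q - 1), tr (by omega) (d (q - 1) b) = a) :
    ∃ φ : ∀ i : ℕ, (Fin i → G) → A (m - i - 1),
      -- ω = −dφ₀
      (ω = - tr (by omega) (d (m - (0 : ℕ) - 1) (φ 0 ![])))
      -- δ'φ_{i} + δ''φ_{i+1} = 0 for i+1 = 1, …, p
      ∧ (∀ i : ℕ, i + 1 ≤ p →
          gd (act (m - i - 1)) (φ i)
            + (fun gs => tr (by omega) (gdd d (φ (i + 1)) gs)) = 0)
      -- every value of δ'φ_p is closed
      ∧ (∀ gs : Fin (p + 1) → G,
          d (m - p - 1) (gd (act (m - p - 1)) (φ p) gs) = 0) := by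
  obtain ⟨φ₀, hω, hφ₀⟩ := exists_cochain_zero_of_exact_invariant d act
    (q' := m - ((0 : ℕ) : ℤ) - 1) (by omega) (hcomm _) hωinv
    (exists_tr_d_eq_of_exists_sub_one d hωexact _)
  obtain ⟨φ, rfl, hlink, hclosed⟩ := exists_chain_of_extend
    (C := fun i => (Fin i → G) → A (m - i - 1))
    (fun _ f => ∀ gs, d _ (gd (act _) f gs) = 0)
    (fun _ f f' => gd (act _) f + (fun gs => tr (by omega) (gdd d f' gs)) = 0) p
    (fun i hi f hf => by
      obtain ⟨f', hf'⟩ := exists_gd_add_gdd_eq_zero d act (q' := m - ((i + 1 : ℕ) : ℤ) - 1)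
        (by omega) f (fun a ha => exists_tr_d_eq_of_exists_sub_one d
          (hexact _ (by omega) (by omega) a ha) _) hf
      exact ⟨f', hf', d_gd_eq_zero_of_gd_add_gdd_eq_zero d act _ (hact_one _) (hact_mul _)
        (hcomm _) f f' hf'⟩)
    φ₀ hφ₀
  exact ⟨φ, hω, hlink, hclosed⟩
end

section
/- Let w be a nonzero alternating m-form on ℝⁿ (1 ≤ m ≤ n), and let ω be the constant m-form ω(x) ≡ w on ℝⁿ. Let the group G = (ℝⁿ, +) act on forms by pullback along translations. For j = 0, …, m−1 define φ_j ∈ C^j(G, Ω^{m−j−1}(ℝⁿ)) by φ_j(a_1,…,a_j)(x)(v_1,…,v_{m−j−1}) = [(−1)^{j−1} / (m(m−1)⋯(m−j))] · w(a_1,…,a_j, x, v_1,…,v_{m−j−1}), for a_1,…,a_j, x, v_1,…,v_{m−j−1} ∈ ℝⁿ. Then ω = −dφ_0, and δ'φ_{j−1} + δ''φ_j = 0 for j = 1,…,m−1. -/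
/-!
`φ_j(a)` is `x ↦ c_j · w(a, x, ·)`: linear in `x` with alternating values, so its exterior
derivative is `(m - j) c_j · w(a, ·)` (Mathlib's `alternatizeUncurryFin_curryLeft`).
On the group side, `φ_j` is multilinear in `(a, x)`, so in the coboundary each merged term
`φ_j(…, a_i + a_{i+1}, …)` splits in two, the sum telescopes, and only
`(-1)^{j+1} c_j · w(a_1, …, a_{j+1}, ·)` survives, independently of `x`. The coefficients
`c_j = (-1)^{j+1} / (m (m-1) ⋯ (m-j))` are exactly those with `(m - j - 1) c_{j+1} = -c_j`.
-/

open scoped BigOperators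

noncomputable section

/-- A (raw) differential `q`-form on `ℝⁿ`: a map assigning to every point of `ℝⁿ` a
function of `q` vectors (alternating `q`-linear, in the case of an actual form). -/
abbrev Form (n q : ℕ) :=
  EuclideanSpace ℝ (Fin n) → (Fin q → EuclideanSpace ℝ (Fin n)) → ℝ

/-- The exterior derivative,
`(dη)(x)(v₀,…,v_q) = ∑ᵢ (−1)^i (Dη(x)vᵢ)(v₀,…,v̂ᵢ,…,v_q)`,
where `D` is the Fréchet derivative. -/
def extD {n q : ℕ} (η : Form n q) : Form n (q + 1) :=
  fun x v => ∑ i : Fin (q + 1),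
    (-1 : ℝ) ^ (i : ℕ) * fderiv ℝ (fun y => η y (v ∘ i.succAbove)) x (v i)

/-- Merge the `i`-th and `(i+1)`-st entries of a tuple of elements of an additive group:
the tuple `(g₁, …, g_i + g_{i+1}, …, g_{p+1})` (0-indexed). -/
def addIns {G : Type*} [Add G] {p : ℕ} (g : Fin (p + 1) → G) (i : Fin p) : Fin p → G :=
  fun j =>
    if (j : ℕ) < (i : ℕ) then g j.castSucc
    else if (j : ℕ) = (i : ℕ) then g j.castSucc + g j.succ
    else g j.succ

/-- `δ'` : the nonhomogeneous group-cochain differential, for a right action `act` of an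
additive group `G`:
`(Df)(g₁,…,g_{p+1}) = f(g₂,…,g_{p+1}) + ∑ (-1)^i f(g₁,…,g_i + g_{i+1},…,g_{p+1})
  + (-1)^{p+1} (f(g₁,…,g_p))·g_{p+1}`. -/
def gdA {G : Type*} [Add G] {A : Type*} [AddCommGroup A] [Module ℝ A]
    (act : G → A → A) {p : ℕ} (f : (Fin p → G) → A) : (Fin (p + 1) → G) → A :=
  fun g =>
    f (Fin.tail g)
      + ∑ i : Fin p, ((-1 : ℝ) ^ ((i : ℕ) + 1)) • f (addIns g i)
      + ((-1 : ℝ) ^ (p + 1)) • act (g (Fin.last p)) (f (Fin.init g))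

/-- Pullback of a `q`-form along the translation `x ↦ x + a`: `(η·a)(x) = η(x + a)`. -/
def pbT {n q : ℕ} (a : EuclideanSpace ℝ (Fin n)) (η : Form n q) : Form n q :=
  fun x v => η (x + a) v

/-- The tuple `(a₁, …, a_j, x, v₁, …, v_{m−j−1})` of length `m`. -/
def concatJ {m j : ℕ} {α : Type*} (a : Fin j → α) (x : α) (v : Fin (m - j - 1) → α) :
    Fin m → α :=
  fun k =>
    if h : (k : ℕ) < j then a ⟨k, h⟩
    else if h' : (k : ℕ) = j then x
    else v ⟨(k : ℕ) - j - 1, by have := k.isLt; omega⟩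

/-- The cochains of the example:
`φ_j(a₁,…,a_j)(x)(v₁,…,v_{m−j−1}) =
  [(−1)^{j−1}/(m(m−1)⋯(m−j))] · w(a₁,…,a_j, x, v₁,…,v_{m−j−1})`. -/
def phiEx (n m : ℕ) (w : AlternatingMap ℝ (EuclideanSpace ℝ (Fin n)) ℝ (Fin m)) (j : ℕ) :
    (Fin j → EuclideanSpace ℝ (Fin n)) → Form n (m - j - 1) :=
  fun a x v =>
    ((-1 : ℝ) ^ (j + 1) / ∏ t ∈ Finset.range (j + 1), ((m - t : ℕ) : ℝ)) *
      w (concatJ a x v)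

open Function

namespace Fin

variable {α : Type*} {p q : ℕ}

theorem append_update_left [DecidableEq (Fin p)] [DecidableEq (Fin (p + q))] (a : Fin p → α)
    (v : Fin q → α) (i : Fin p) (x : α) :
    append (update a i x) v = update (append a v) (castAdd q i) x := by
  ext k
  refine addCases (fun k => ?_) (fun k => ?_) k
  · simp [update_apply]
  · simp [update_apply, Fin.ext_iff]; omega

theorem append_update_right [DecidableEq (Fin q)] [DecidableEq (Fin (p + q))] (a : Fin p → α)
    (v : Fin q → α) (i : Fin q) (x : α) :
    append a (update v i x) = update (append a v) (natAdd p i) x := by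
  ext k
  refine addCases (fun k => ?_) (fun k => ?_) k
  · simp [update_apply, Fin.ext_iff]; omega
  · simp [update_apply]

theorem removeNth_succ_eq_update (a : Fin (p + 1) → α) (i : Fin p) :
    removeNth i.succ a = update (removeNth i.castSucc a) i (a i.castSucc) := by
  ext k
  rcases lt_trichotomy k i with h | rfl | h
  · simp [removeNth, h.ne, succAbove_castSucc_of_lt _ _ h, succAbove_succ_of_le _ _ h.le]
  · simp [removeNth]
  · simp [removeNth, h.ne', succAbove_castSucc_of_le _ _ h.le, succAbove_succ_of_lt _ _ h]

theorem sum_neg_one_pow_smul_castSucc_add_succ {B : Type*} [AddCommGroup B] [Module ℝ B]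
    (D : Fin (p + 1) → B) :
    ∑ i : Fin p, (-1 : ℝ) ^ ((i : ℕ) + 1) • (D i.castSucc + D i.succ)
      = -D 0 + (-1 : ℝ) ^ p • D (last p) := by
  have hsucc := sum_univ_succ fun k : Fin (p + 1) => (-1 : ℝ) ^ (k : ℕ) • D k
  have hcastSucc := sum_univ_castSucc fun k : Fin (p + 1) => (-1 : ℝ) ^ (k : ℕ) • D k
  simp only [val_succ, val_castSucc, val_zero, pow_zero, one_smul, val_last] at hsucc hcastSucc
  rw [Finset.sum_congr rfl fun i _ => smul_add _ _ _, Finset.sum_add_distrib]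
  simp only [pow_succ, mul_neg_one, neg_smul, Finset.sum_neg_distrib] at hsucc ⊢
  linear_combination (norm := module) hcastSucc - hsucc

end Fin

namespace MultilinearMap

variable {R M N : Type*} [CommSemiring R] [AddCommMonoid M] [AddCommMonoid N] [Module R M]
  [Module R N] {p q : ℕ}

def curryAppendLeft (f : MultilinearMap R (fun _ : Fin (p + q) => M) N) (a : Fin p → M) :
    MultilinearMap R (fun _ : Fin q => M) N where
  toFun v := f (Fin.append a v)
  map_update_add' v i x y := by simp [Fin.append_update_right]
  map_update_smul' v i c x := by simp [Fin.append_update_right]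

def curryAppendRight (f : MultilinearMap R (fun _ : Fin (p + q) => M) N) (v : Fin q → M) :
    MultilinearMap R (fun _ : Fin p => M) N where
  toFun a := f (Fin.append a v)
  map_update_add' a i x y := by simp [Fin.append_update_left]
  map_update_smul' a i c x := by simp [Fin.append_update_left]

end MultilinearMap

namespace AlternatingMap

variable {R M N : Type*} [CommSemiring R] [AddCommMonoid M] [AddCommMonoid N] [Module R M]
  [Module R N] {p q : ℕ}

def curryAppendLeft (f : M [⋀^Fin (p + q)]→ₗ[R] N) (a : Fin p → M) : M [⋀^Fin q]→ₗ[R] N where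
  toMultilinearMap := f.toMultilinearMap.curryAppendLeft a
  map_eq_zero_of_eq' v i j hv hij :=
    f.map_eq_zero_of_eq (Fin.append a v) (i := Fin.natAdd p i) (j := Fin.natAdd p j)
      (by simpa using hv) (by simpa using hij)

end AlternatingMap

theorem extD_eq_alternatizeUncurryFin {n q : ℕ}
    (L : EuclideanSpace ℝ (Fin n) →ₗ[ℝ] EuclideanSpace ℝ (Fin n) [⋀^Fin q]→ₗ[ℝ] ℝ)
    (x : EuclideanSpace ℝ (Fin n)) (u : Fin (q + 1) → EuclideanSpace ℝ (Fin n)) :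
    extD (fun y v => L y v) x u = AlternatingMap.alternatizeUncurryFin L u := by
  rw [AlternatingMap.alternatizeUncurryFin_apply]
  refine Finset.sum_congr rfl fun i _ => ?_
  let ℓ : EuclideanSpace ℝ (Fin n) →ₗ[ℝ] ℝ :=
    { toFun y := L y (u ∘ i.succAbove)
      map_add' y z := by simp
      map_smul' c y := by simp }
  rw [show (fun y => L y (u ∘ i.succAbove)) = ℓ.toContinuousLinearMap from rfl,
    ContinuousLinearMap.fderiv, zsmul_eq_mul]
  push_cast
  rfl

theorem addIns_eq_update {G : Type*} [Add G] {p : ℕ} (a : Fin (p + 1) → G) (i : Fin p) :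
    addIns a i = update (Fin.removeNth i.castSucc a) i (a i.castSucc + a i.succ) := by
  ext k
  rcases lt_trichotomy k i with h | rfl | h
  · simp [addIns, Fin.removeNth, h, h.ne, Fin.succAbove_castSucc_of_lt _ _ h]
  · simp [addIns]
  · simp [addIns, Fin.removeNth, h.ne', Fin.val_injective.ne h.ne', not_lt.2 h.le,
      Fin.succAbove_castSucc_of_le _ _ h.le]

theorem gdA_translate_of_multilinearMap {M B : Type*} [AddCommGroup M] [Module ℝ M]
    [AddCommGroup B] [Module ℝ B] {p : ℕ} (Φ : MultilinearMap ℝ (fun _ : Fin (p + 1) => M) B)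
    (a : Fin (p + 1) → M) (x : M) :
    gdA (fun g (η : M → B) y => η (y + g)) (fun b y => Φ (Fin.snoc b y)) a x
      = (-1 : ℝ) ^ (p + 1) • Φ a := by
  set D : Fin (p + 1) → B := fun k => Φ (Fin.snoc (Fin.removeNth k a) x)
  have hcontract (i : Fin p) : Φ (Fin.snoc (addIns a i) x) = D i.castSucc + D i.succ := by
    have hself : Fin.removeNth i.castSucc a i = a i.succ := by simp [Fin.removeNth]
    rw [addIns_eq_update, Fin.snoc_update, Φ.map_update_add, ← Fin.snoc_update,
      ← Fin.snoc_update, ← Fin.removeNth_succ_eq_update, ← hself, update_eq_self, add_comm]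
  have hlast : Φ (Fin.snoc (Fin.init a) (x + a (Fin.last p))) = D (Fin.last p) + Φ a := by
    rw [← Fin.update_snoc_last (x := x), Φ.map_update_add, Fin.update_snoc_last,
      Fin.update_snoc_last, Fin.snoc_init_self, ← Fin.removeNth_last]
  simp only [gdA, Pi.add_apply, Finset.sum_apply, Pi.smul_apply, hcontract, hlast,
    Fin.sum_neg_one_pow_smul_castSucc_add_succ, ← Fin.removeNth_zero]
  module

theorem concatJ_eq_append {α : Type*} {m j : ℕ} (h : j + (m - j - 1 + 1) = m) (b : Fin j → α)
    (x : α) (v : Fin (m - j - 1) → α) :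
    concatJ b x v = Fin.append b (Fin.cons x v) ∘ Fin.cast h.symm := by
  funext k
  obtain ⟨k, rfl⟩ : ∃ k', k = Fin.cast h k' := ⟨Fin.cast h.symm k, by simp⟩
  refine Fin.addCases (fun i => ?_) (fun i => ?_) k
  · simp [concatJ]
  · refine Fin.cases ?_ (fun l => ?_) i <;> simp [concatJ]

def phiCoeff (m j : ℕ) : ℝ := (-1 : ℝ) ^ (j + 1) / ∏ t ∈ Finset.range (j + 1), ((m - t : ℕ) : ℝ)

theorem mul_phiCoeff_succ {m j : ℕ} (hj : j + 2 ≤ m) :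
    ((m - (j + 1) : ℕ) : ℝ) * phiCoeff m (j + 1) = -phiCoeff m j := by
  have hprod : ∏ t ∈ Finset.range (j + 1), ((m - t : ℕ) : ℝ) ≠ 0 :=
    Finset.prod_ne_zero_iff.2 fun t ht => by
      have := Finset.mem_range.1 ht
      exact Nat.cast_ne_zero.2 (by omega)
  have hlast : ((m - (j + 1) : ℕ) : ℝ) ≠ 0 := Nat.cast_ne_zero.2 (by omega)
  rw [phiCoeff, phiCoeff, Finset.prod_range_succ, pow_succ]
  field_simp

section phiEx

variable {n m : ℕ} (w : AlternatingMap ℝ (EuclideanSpace ℝ (Fin n)) ℝ (Fin m))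

theorem phiEx_eq_curryLeft {j : ℕ} (h : j + (m - j - 1 + 1) = m)
    (b : Fin j → EuclideanSpace ℝ (Fin n)) :
    phiEx n m w j b = fun x v => AlternatingMap.curryLeft
      (phiCoeff m j • (w.domDomCongr (finCongr h.symm)).curryAppendLeft b) x v := by
  ext x v
  simp only [phiEx, concatJ_eq_append h]
  rfl

theorem extD_phiEx {j : ℕ} (h : j + (m - j - 1 + 1) = m) (b : Fin j → EuclideanSpace ℝ (Fin n))
    (x : EuclideanSpace ℝ (Fin n)) (u : Fin (m - j - 1 + 1) → EuclideanSpace ℝ (Fin n)) :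
    extD (phiEx n m w j b) x u
      = ((m - j : ℕ) : ℝ) * phiCoeff m j * w (Fin.append b u ∘ Fin.cast h.symm) := by
  rw [phiEx_eq_curryLeft w h, extD_eq_alternatizeUncurryFin,
    AlternatingMap.alternatizeUncurryFin_curryLeft, AlternatingMap.smul_apply,
    AlternatingMap.smul_apply, nsmul_eq_mul, mul_assoc]
  congr 2
  omega

theorem phiEx_eq_snoc {j : ℕ} (h : j + 1 + (m - j - 1) = m) :
    phiEx n m w j = fun b y => MultilinearMap.pi (fun v => phiCoeff m j •
      (w.domDomCongr (finCongr h.symm)).toMultilinearMap.curryAppendRight v) (Fin.snoc b y) := by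
  ext b y v
  simp only [phiEx, concatJ_eq_append (by omega : j + (m - j - 1 + 1) = m),
    Fin.append_right_cons]
  rfl

theorem gdA_phiEx {j : ℕ} (h : j + 1 + (m - j - 1) = m)
    (a : Fin (j + 1) → EuclideanSpace ℝ (Fin n)) (x : EuclideanSpace ℝ (Fin n))
    (v : Fin (m - j - 1) → EuclideanSpace ℝ (Fin n)) :
    gdA pbT (phiEx n m w j) a x v
      = (-1 : ℝ) ^ (j + 1) * phiCoeff m j * w (Fin.append a v ∘ Fin.cast h.symm) := by
  rw [phiEx_eq_snoc w h]
  exact (congrFun (gdA_translate_of_multilinearMap _ a x) v).trans (mul_assoc _ _ _).symm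

end phiEx

/-- Let `w` be a nonzero alternating `m`-form on `ℝⁿ` (`1 ≤ m ≤ n`), let
`ω(x) ≡ w` be the corresponding constant (translation-invariant) `m`-form, and let the
group `G = (ℝⁿ, +)` act on forms by pullback along translations.  Then the cochains
`φ_j ∈ C^j(G, Ω^{m−j−1}(ℝⁿ))` defined above satisfy `ω = −dφ₀` and
`δ'φ_{j−1} + δ''φ_j = 0` for `j = 1, …, m−1`. -/
theorem statement8 (n m : ℕ) (hm : 1 ≤ m)
    (w : AlternatingMap ℝ (EuclideanSpace ℝ (Fin n)) ℝ (Fin m)) :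
    -- ω = −dφ₀
    (∀ (x : EuclideanSpace ℝ (Fin n)) (v : Fin m → EuclideanSpace ℝ (Fin n)),
        w v = - extD (phiEx n m w 0 ![]) x (fun k => v (Fin.cast (by omega) k)))
    -- δ'φ_j + δ''φ_{j+1} = 0 for j+1 = 1, …, m−1, where δ''φ_{j+1} = (−1)^{j+1} d φ_{j+1}
    ∧ (∀ (j : ℕ) (hj : j + 1 ≤ m - 1),
        ∀ (a : Fin (j + 1) → EuclideanSpace ℝ (Fin n)) (x : EuclideanSpace ℝ (Fin n))
          (v : Fin (m - j - 1) → EuclideanSpace ℝ (Fin n)),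
        gdA pbT (phiEx n m w j) a x v
          + ((-1 : ℝ) ^ (j + 1)) *
              extD (phiEx n m w (j + 1) a) x (fun k => v (Fin.cast (by omega) k)) = 0) := by
  refine ⟨fun x v => ?_, fun j hj a x v => ?_⟩
  · have hm' : (m : ℝ) ≠ 0 := Nat.cast_ne_zero.2 (by omega)
    rw [extD_phiEx w (by omega), phiCoeff, Fin.append_left_nil _ _ rfl]
    simp only [Nat.sub_zero, zero_add, pow_one, Finset.prod_range_one]
    field_simp
    rfl
  · have happend :
        (Fin.append a fun k : Fin (m - (j + 1) - 1 + 1) => v (Fin.cast (by omega) k))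
          ∘ Fin.cast (by omega : m = j + 1 + (m - (j + 1) - 1 + 1))
        = Fin.append a v ∘ Fin.cast (by omega : m = j + 1 + (m - j - 1)) := by
      rw [show (fun k : Fin (m - (j + 1) - 1 + 1) => v (Fin.cast (by omega) k))
        = v ∘ Fin.cast (by omega) from rfl, Fin.append_cast_right]
      rfl
    rw [gdA_phiEx w (by omega), extD_phiEx w (by omega), happend]
    linear_combination (-1 : ℝ) ^ (j + 1) * w (Fin.append a v ∘ Fin.cast (by omega)) *
      mul_phiCoeff_succ (m := m) (j := j) (by omega)
end
end
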